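/- Let d be a positive integer with d ≡ 1 or 2 (mod 4), and write d = d₀f² with d₀ squarefree (so f is odd). Then r₂₄(d) = (1/6) · Σ_{c ∣ f} Σ_{c′ ∣ f, gcd(c,c′)=1} r₃,prim(d/c²) · r₃,prim(d/c′²). -/

import Mathlib

/-- `r₂₄(n)`: half the number of vectors `(a,b,c,d,e,f) ∈ ℤ⁶` with
`gcd(a,b,c,d,e,f) = 1`, `af − be + cd = 0` and `a²+b²+c²+d²+e²+f² = n`. -/
noncomputable def r24 (n : ℕ) : ℚ :=
  (Nat.card {w : Fin 6 → ℤ //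
    Finset.univ.gcd w = 1 ∧
    w 0 * w 5 - w 1 * w 4 + w 2 * w 3 = 0 ∧
    (w 0) ^ 2 + (w 1) ^ 2 + (w 2) ^ 2 + (w 3) ^ 2 + (w 4) ^ 2 + (w 5) ^ 2 = (n : ℤ)} : ℚ) / 2

/-- `r₃,prim(n)`: the number of triples `(x,y,z) ∈ ℤ³` with `x²+y²+z² = n`
and `gcd(x,y,z) = 1`. -/
noncomputable def r3prim (n : ℕ) : ℕ :=
  Nat.card {v : Fin 3 → ℤ //
    (v 0) ^ 2 + (v 1) ^ 2 + (v 2) ^ 2 = (n : ℤ) ∧ Finset.univ.gcd v = 1}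

open Finset

-- basic helpers test
example (x m : ℤ) (hm : 0 ≤ m) (h : x^2 ≤ m) : -m ≤ x ∧ x ≤ m := by
  constructor <;> nlinarith

lemma sq_emod_four (x : ℤ) : x^2 % 4 = x % 2 := by
  rcases Int.emod_two_eq x with h | h
  · obtain ⟨k, rfl⟩ : ∃ k, x = 2*k := ⟨x/2, by omega⟩
    have h2 : (2*k)^2 = 4*k^2 := by ring
    rw [h2]; omega
  · obtain ⟨k, hk⟩ : ∃ k, x = 2*k+1 := ⟨x/2, by omega⟩
    have h2 : x^2 = 4*(k^2+k)+1 := by rw [hk]; ring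
    rw [h2]; omega

lemma gcd_int_nonneg (s : Finset α) (f : α → ℤ) : 0 ≤ s.gcd f := by
  rw [← Finset.normalize_gcd, ← Int.abs_eq_normalize]
  exact abs_nonneg _

lemma gcd_comp_perm (σ : Equiv.Perm (Fin 3)) (v : Fin 3 → ℤ) :
    Finset.univ.gcd (v ∘ σ) = Finset.univ.gcd v := by
  apply Int.dvd_antisymm (gcd_int_nonneg _ _) (gcd_int_nonneg _ _)
  · exact Finset.dvd_gcd fun i _ => by
      have := Finset.gcd_dvd (Finset.mem_univ (σ.symm i)) (f := v ∘ σ)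
      simpa using this
  · exact Finset.dvd_gcd fun i _ => Finset.gcd_dvd (Finset.mem_univ (σ i))

lemma squarefree_sq_dvd {c d₀ f : ℕ} (hd₀ : d₀ ≠ 0) (hf : f ≠ 0) (hsq : Squarefree d₀)
    (h : c^2 ∣ d₀ * f^2) : c ∣ f := by
  have hc : c ≠ 0 := by
    rintro rfl
    simp at h
    omega
  rw [← Nat.factorization_le_iff_dvd hc hf]
  intro p
  have h1 := (Nat.factorization_le_iff_dvd (pow_ne_zero 2 hc) (by positivity)).2 h
  have h2 := h1 p
  rw [Nat.factorization_pow, Nat.factorization_mul hd₀ (pow_ne_zero 2 hf),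
    Nat.factorization_pow] at h2
  have h3 := hsq.natFactorization_le_one p
  simp only [Finsupp.coe_add, Finsupp.coe_smul, Pi.add_apply, Pi.smul_apply, smul_eq_mul] at h2
  omega
open Finset

noncomputable def sph (m : ℕ) : Finset (Fin 3 → ℤ) :=
  (Finset.Icc (fun _ => -(m:ℤ)) (fun _ => (m:ℤ))).filter
    (fun v => v 0^2 + v 1^2 + v 2^2 = (m:ℤ))

noncomputable def psph (m : ℕ) : Finset (Fin 3 → ℤ) :=
  (sph m).filter (fun v => Finset.univ.gcd v = 1)

noncomputable def W6 (d : ℕ) : Finset (Fin 6 → ℤ) :=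
  (Finset.Icc (fun _ => -(d:ℤ)) (fun _ => (d:ℤ))).filter
    (fun w => Finset.univ.gcd w = 1 ∧ w 0 * w 5 - w 1 * w 4 + w 2 * w 3 = 0 ∧
      w 0^2 + w 1^2 + w 2^2 + w 3^2 + w 4^2 + w 5^2 = (d:ℤ))

lemma sq_le_self_bound {x m : ℤ} (hm : 0 ≤ m) (h : x^2 ≤ m) : -m ≤ x ∧ x ≤ m := by
  constructor <;> nlinarith

lemma mem_sph {m : ℕ} {v : Fin 3 → ℤ} : v ∈ sph m ↔ v 0^2 + v 1^2 + v 2^2 = (m:ℤ) := by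
  constructor
  · exact fun h => (mem_filter.1 h).2
  · intro h
    refine mem_filter.2 ⟨Finset.mem_Icc.2 ⟨?_, ?_⟩, h⟩ <;>
    · intro i
      have hb : v i ^ 2 ≤ (m:ℤ) := by
        fin_cases i <;> show _ ≤ _ <;>
        first
        | (show v 0 ^ 2 ≤ (m:ℤ); nlinarith [sq_nonneg (v 1), sq_nonneg (v 2)])
        | (show v 1 ^ 2 ≤ (m:ℤ); nlinarith [sq_nonneg (v 0), sq_nonneg (v 2)])
        | (show v 2 ^ 2 ≤ (m:ℤ); nlinarith [sq_nonneg (v 0), sq_nonneg (v 1)])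
      have h2 := sq_le_self_bound (by positivity) hb
      first | exact h2.1 | exact h2.2

lemma mem_psph {m : ℕ} {v : Fin 3 → ℤ} :
    v ∈ psph m ↔ (v 0^2 + v 1^2 + v 2^2 = (m:ℤ) ∧ Finset.univ.gcd v = 1) := by
  rw [psph, mem_filter, mem_sph]

lemma mem_W6 {d : ℕ} {w : Fin 6 → ℤ} :
    w ∈ W6 d ↔ (Finset.univ.gcd w = 1 ∧ w 0 * w 5 - w 1 * w 4 + w 2 * w 3 = 0 ∧
      w 0^2 + w 1^2 + w 2^2 + w 3^2 + w 4^2 + w 5^2 = (d:ℤ)) := by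
  constructor
  · exact fun h => (mem_filter.1 h).2
  · rintro ⟨h1, h2, h⟩
    refine mem_filter.2 ⟨Finset.mem_Icc.2 ⟨?_, ?_⟩, h1, h2, h⟩ <;>
    · intro i
      have hb : w i ^ 2 ≤ (d:ℤ) := by
        fin_cases i <;> show _ ≤ _ <;>
        first
        | (show w 0 ^ 2 ≤ (d:ℤ); nlinarith [sq_nonneg (w 1), sq_nonneg (w 2), sq_nonneg (w 3), sq_nonneg (w 4), sq_nonneg (w 5)])
        | (show w 1 ^ 2 ≤ (d:ℤ); nlinarith [sq_nonneg (w 0), sq_nonneg (w 2), sq_nonneg (w 3), sq_nonneg (w 4), sq_nonneg (w 5)])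
        | (show w 2 ^ 2 ≤ (d:ℤ); nlinarith [sq_nonneg (w 0), sq_nonneg (w 1), sq_nonneg (w 3), sq_nonneg (w 4), sq_nonneg (w 5)])
        | (show w 3 ^ 2 ≤ (d:ℤ); nlinarith [sq_nonneg (w 0), sq_nonneg (w 1), sq_nonneg (w 2), sq_nonneg (w 4), sq_nonneg (w 5)])
        | (show w 4 ^ 2 ≤ (d:ℤ); nlinarith [sq_nonneg (w 0), sq_nonneg (w 1), sq_nonneg (w 2), sq_nonneg (w 3), sq_nonneg (w 5)])
        | (show w 5 ^ 2 ≤ (d:ℤ); nlinarith [sq_nonneg (w 0), sq_nonneg (w 1), sq_nonneg (w 2), sq_nonneg (w 3), sq_nonneg (w 4)])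
      have h2 := sq_le_self_bound (by positivity) hb
      first | exact h2.1 | exact h2.2

lemma r3prim_eq_card (m : ℕ) : r3prim m = (psph m).card := by
  rw [r3prim, ← Nat.card_eq_finsetCard]
  exact Nat.card_congr (Equiv.subtypeEquivRight (fun v => by rw [mem_psph]))

lemma r24_eq_card (d : ℕ) : r24 d = ((W6 d).card : ℚ) / 2 := by
  rw [r24, ← Nat.card_eq_finsetCard]
  congr 1
  exact_mod_cast congrArg (Nat.cast (R := ℚ))
    (Nat.card_congr (Equiv.subtypeEquivRight (fun w => by rw [mem_W6])))
open Finset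

def ct {k : ℕ} (v : Fin k → ℤ) : ℕ := (Finset.univ.gcd v).natAbs

lemma gcd_eq_ct {k : ℕ} (v : Fin k → ℤ) : Finset.univ.gcd v = (ct v : ℤ) := by
  rw [ct, Int.natCast_natAbs, Int.abs_eq_normalize, Finset.normalize_gcd]

lemma ct_dvd {k : ℕ} (v : Fin k → ℤ) (i : Fin k) : ((ct v : ℤ)) ∣ v i := by
  rw [← gcd_eq_ct]; exact Finset.gcd_dvd (mem_univ i)

lemma ct_smul {k c : ℕ} (v : Fin k → ℤ) : ct (fun i => (c:ℤ) * v i) = c * ct v := by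
  unfold ct
  rw [Finset.gcd_mul_left, Int.natAbs_mul]
  congr 1
  rw [← Int.abs_eq_normalize, Int.natAbs_abs, Int.natAbs_natCast]

lemma dvd_ct {k : ℕ} (v : Fin k → ℤ) (e : ℤ) (h : ∀ i, e ∣ v i) : e ∣ (ct v : ℤ) := by
  rw [← gcd_eq_ct]; exact Finset.dvd_gcd (fun i _ => h i)

lemma odd_mul_emod_two (c x : ℤ) (hc : c % 2 = 1) : (c * x) % 2 = x % 2 := by
  rw [Int.mul_emod, hc]
  omega

lemma ct_ne_zero {v : Fin 3 → ℤ} {d : ℕ} (hd : 0 < d)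
    (hv : v 0^2 + v 1^2 + v 2^2 = (d:ℤ)) : ct v ≠ 0 := by
  intro h
  have h0 : ∀ i, v i = 0 := by
    intro i
    have h1 := ct_dvd v i
    rw [h] at h1
    simpa using h1
  rw [h0 0, h0 1, h0 2] at hv
  simp at hv
  omega

lemma ct_odd {v : Fin 3 → ℤ} {d : ℕ} (h12 : d % 4 = 1 ∨ d % 4 = 2)
    (hv : v 0^2 + v 1^2 + v 2^2 = (d:ℤ)) : ct v % 2 = 1 := by
  rcases Nat.even_or_odd (ct v) with he | ho
  · exfalso
    have h2 : ∀ i, (2:ℤ) ∣ v i := by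
      intro i
      exact dvd_trans (by exact_mod_cast Int.natCast_dvd_natCast.2 he.two_dvd) (ct_dvd v i)
    obtain ⟨y0, e0⟩ := h2 0
    obtain ⟨y1, e1⟩ := h2 1
    obtain ⟨y2, e2⟩ := h2 2
    have h4 : (4:ℤ) ∣ (d:ℤ) := ⟨y0^2 + y1^2 + y2^2, by rw [← hv, e0, e1, e2]; ring⟩
    have h4' : (4:ℕ) ∣ d := by exact_mod_cast h4
    omega
  · exact Nat.odd_iff.mp ho

lemma div_sq_mod_four {c m d : ℕ} (hc : c % 2 = 1) (h : d = m * c^2) : d % 4 = m % 4 := by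
  obtain ⟨t, rfl⟩ : ∃ t, c = 2*t+1 := ⟨c/2, by omega⟩
  have h2 : d = 4*(m*(t*t+t)) + m := by rw [h]; ring
  omega

lemma decomp {d : ℕ} (hd : 0 < d) {v : Fin 3 → ℤ}
    (hv : v 0^2 + v 1^2 + v 2^2 = (d:ℤ)) :
    (ct v)^2 ∣ d ∧ ∃ u : Fin 3 → ℤ, (∀ i, v i = (ct v : ℤ) * u i) ∧
      u 0^2 + u 1^2 + u 2^2 = ((d / (ct v)^2 : ℕ) : ℤ) ∧ Finset.univ.gcd u = 1 := by
  have hcne : ct v ≠ 0 := ct_ne_zero hd hv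
  obtain ⟨u, hu⟩ : ∃ u : Fin 3 → ℤ, ∀ i, v i = (ct v : ℤ) * u i :=
    ⟨fun i => v i / ct v, fun i => (Int.mul_ediv_cancel' (ct_dvd v i)).symm⟩
  have hnorm : ((ct v : ℤ))^2 * (u 0^2 + u 1^2 + u 2^2) = (d:ℤ) := by
    rw [← hv, hu 0, hu 1, hu 2]; ring
  have hdvd : (ct v)^2 ∣ d := by
    have h1 : ((ct v : ℤ))^2 ∣ (d:ℤ) := ⟨u 0^2 + u 1^2 + u 2^2, hnorm.symm⟩
    exact_mod_cast h1
  refine ⟨hdvd, u, hu, ?_, ?_⟩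
  · have hmcast : ((ct v : ℤ))^2 * ((d / (ct v)^2 : ℕ) : ℤ) = (d:ℤ) := by
      exact_mod_cast congrArg (Nat.cast (R := ℤ)) (Nat.mul_div_cancel' hdvd)
    have hc0 : ((ct v : ℤ))^2 ≠ 0 := by positivity
    exact mul_left_cancel₀ hc0 (hnorm.trans hmcast.symm)
  · have hveq : v = fun i => (ct v : ℤ) * u i := funext hu
    have h1 : ct v = ct v * ct u := by
      conv_lhs => rw [hveq]
      exact ct_smul u
    have h2 : ct u = 1 := by
      rcases Nat.eq_zero_or_pos (ct v) with h | h
      · exact absurd h hcne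
      · nlinarith [h1]
    rw [gcd_eq_ct, h2, Nat.cast_one]

lemma pattern {m : ℕ} (h4 : m % 4 = 1 ∨ m % 4 = 2) {v : Fin 3 → ℤ}
    (hv : v 0^2 + v 1^2 + v 2^2 = (m:ℤ)) :
    (v 0 % 2 = (m:ℤ) % 2 ∧ ¬ v 1 % 2 = (m:ℤ) % 2 ∧ ¬ v 2 % 2 = (m:ℤ) % 2) ∨
    (¬ v 0 % 2 = (m:ℤ) % 2 ∧ v 1 % 2 = (m:ℤ) % 2 ∧ ¬ v 2 % 2 = (m:ℤ) % 2) ∨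
    (¬ v 0 % 2 = (m:ℤ) % 2 ∧ ¬ v 1 % 2 = (m:ℤ) % 2 ∧ v 2 % 2 = (m:ℤ) % 2) := by
  obtain ⟨A, hA, hA4⟩ : ∃ A, v 0^2 = A ∧ A % 4 = v 0 % 2 := ⟨_, rfl, sq_emod_four _⟩
  obtain ⟨B, hB, hB4⟩ : ∃ B, v 1^2 = B ∧ B % 4 = v 1 % 2 := ⟨_, rfl, sq_emod_four _⟩
  obtain ⟨C, hC, hC4⟩ : ∃ C, v 2^2 = C ∧ C % 4 = v 2 % 2 := ⟨_, rfl, sq_emod_four _⟩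
  rw [hA, hB, hC] at hv
  omega

def jd (p : ℤ) (v : Fin 3 → ℤ) : Fin 3 :=
  if v 0 % 2 = p then 0 else if v 1 % 2 = p then 1 else 2

lemma match_iff {p : ℤ} {u v : Fin 3 → ℤ}
    (hu : (u 0 % 2 = p ∧ ¬ u 1 % 2 = p ∧ ¬ u 2 % 2 = p) ∨
      (¬ u 0 % 2 = p ∧ u 1 % 2 = p ∧ ¬ u 2 % 2 = p) ∨
      (¬ u 0 % 2 = p ∧ ¬ u 1 % 2 = p ∧ u 2 % 2 = p))
    (hv : (v 0 % 2 = p ∧ ¬ v 1 % 2 = p ∧ ¬ v 2 % 2 = p) ∨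
      (¬ v 0 % 2 = p ∧ v 1 % 2 = p ∧ ¬ v 2 % 2 = p) ∨
      (¬ v 0 % 2 = p ∧ ¬ v 1 % 2 = p ∧ v 2 % 2 = p)) :
    ((u 0 - v 0) % 2 = 0 ∧ (u 1 - v 1) % 2 = 0 ∧ (u 2 - v 2) % 2 = 0) ↔ jd p u = jd p v := by
  rcases hu with ⟨hu1, hu2, hu3⟩ | ⟨hu1, hu2, hu3⟩ | ⟨hu1, hu2, hu3⟩ <;>
    rcases hv with ⟨hv1, hv2, hv3⟩ | ⟨hv1, hv2, hv3⟩ | ⟨hv1, hv2, hv3⟩ <;>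
    · rw [jd, jd]
      simp only [hu1, hu2, hu3, hv1, hv2, hv3, eq_self_iff_true, if_true, if_false,
        ite_true, ite_false, not_false_iff]
      constructor
      · rintro ⟨h0, h1, h2⟩
        first | trivial | (exfalso; omega)
      · intro hR
        first
        | (exact hR.elim)
        | (exact absurd hR (by decide))
        | (refine ⟨?_, ?_, ?_⟩ <;> omega)

lemma jd_eq_zero_iff (p : ℤ) (v : Fin 3 → ℤ) : jd p v = 0 ↔ v 0 % 2 = p := by
  unfold jd; split_ifs with h1 h2 <;> simp_all <;> decide

lemma jd_eq_one_iff (p : ℤ) (v : Fin 3 → ℤ) :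
    jd p v = 1 ↔ (¬ v 0 % 2 = p ∧ v 1 % 2 = p) := by
  unfold jd; split_ifs with h1 h2 <;> simp_all <;> decide

lemma jd_eq_two_iff (p : ℤ) (v : Fin 3 → ℤ) :
    jd p v = 2 ↔ (¬ v 0 % 2 = p ∧ ¬ v 1 % 2 = p) := by
  unfold jd; split_ifs with h1 h2 <;> simp_all <;> decide

lemma comp_swap_mem_psph {m : ℕ} (σ : Equiv.Perm (Fin 3)) {v : Fin 3 → ℤ}
    (hv : v ∈ psph m) : (v ∘ σ) ∈ psph m := by
  rw [mem_psph] at hv ⊢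
  refine ⟨?_, by rw [gcd_comp_perm]; exact hv.2⟩
  have h := Equiv.sum_comp σ (fun j => v j ^ 2)
  rw [Fin.sum_univ_three, Fin.sum_univ_three] at h
  show v (σ 0)^2 + v (σ 1)^2 + v (σ 2)^2 = (m:ℤ)
  rw [h]; exact hv.1

lemma class01 {m : ℕ} {p : ℤ} (hp : p = (m:ℤ) % 2) (h4 : m % 4 = 1 ∨ m % 4 = 2) :
    ((psph m).filter (fun v => jd p v = 0)).card
      = ((psph m).filter (fun v => jd p v = 1)).card := by
  have s0 : Equiv.swap (0:Fin 3) 1 0 = 1 := Equiv.swap_apply_left _ _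
  have s1 : Equiv.swap (0:Fin 3) 1 1 = 0 := Equiv.swap_apply_right _ _
  have s2 : Equiv.swap (0:Fin 3) 1 2 = 2 := Equiv.swap_apply_of_ne_of_ne (by decide) (by decide)
  apply Finset.card_nbij' (fun v => v ∘ (Equiv.swap (0:Fin 3) 1))
    (fun v => v ∘ (Equiv.swap (0:Fin 3) 1))
  · intro v hv
    rw [Finset.mem_coe, Finset.mem_filter] at hv ⊢
    obtain ⟨hmem, hjd⟩ := hv
    refine ⟨comp_swap_mem_psph _ hmem, ?_⟩
    have hpat := pattern h4 (mem_psph.1 hmem).1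
    rw [← hp] at hpat
    rw [jd_eq_zero_iff] at hjd
    have hv1 : ¬ v 1 % 2 = p := by
      rcases hpat with ⟨_, h, _⟩ | ⟨h, _, _⟩ | ⟨h, _, _⟩ <;> tauto
    rw [jd_eq_one_iff]
    constructor
    · show ¬ (v ∘ (Equiv.swap (0:Fin 3) 1)) 0 % 2 = p
      rw [Function.comp_apply, s0]; exact hv1
    · show (v ∘ (Equiv.swap (0:Fin 3) 1)) 1 % 2 = p
      rw [Function.comp_apply, s1]; exact hjd
  · intro v hv
    rw [Finset.mem_coe, Finset.mem_filter] at hv ⊢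
    obtain ⟨hmem, hjd⟩ := hv
    refine ⟨comp_swap_mem_psph _ hmem, ?_⟩
    rw [jd_eq_one_iff] at hjd
    rw [jd_eq_zero_iff]
    show (v ∘ (Equiv.swap (0:Fin 3) 1)) 0 % 2 = p
    rw [Function.comp_apply, s0]; exact hjd.2
  · intro v _; funext k; simp [Function.comp_apply, Equiv.swap_apply_self]
  · intro v _; funext k; simp [Function.comp_apply, Equiv.swap_apply_self]

lemma class02 {m : ℕ} {p : ℤ} (hp : p = (m:ℤ) % 2) (h4 : m % 4 = 1 ∨ m % 4 = 2) :
    ((psph m).filter (fun v => jd p v = 0)).card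
      = ((psph m).filter (fun v => jd p v = 2)).card := by
  have s0 : Equiv.swap (0:Fin 3) 2 0 = 2 := Equiv.swap_apply_left _ _
  have s1 : Equiv.swap (0:Fin 3) 2 1 = 1 := Equiv.swap_apply_of_ne_of_ne (by decide) (by decide)
  have s2 : Equiv.swap (0:Fin 3) 2 2 = 0 := Equiv.swap_apply_right _ _
  apply Finset.card_nbij' (fun v => v ∘ (Equiv.swap (0:Fin 3) 2))
    (fun v => v ∘ (Equiv.swap (0:Fin 3) 2))
  · intro v hv
    rw [Finset.mem_coe, Finset.mem_filter] at hv ⊢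
    obtain ⟨hmem, hjd⟩ := hv
    refine ⟨comp_swap_mem_psph _ hmem, ?_⟩
    have hpat := pattern h4 (mem_psph.1 hmem).1
    rw [← hp] at hpat
    rw [jd_eq_zero_iff] at hjd
    have hv1 : ¬ v 1 % 2 = p ∧ ¬ v 2 % 2 = p := by
      rcases hpat with ⟨_, h, h'⟩ | ⟨h, _, _⟩ | ⟨h, _, _⟩ <;> tauto
    rw [jd_eq_two_iff]
    constructor
    · show ¬ (v ∘ (Equiv.swap (0:Fin 3) 2)) 0 % 2 = p
      rw [Function.comp_apply, s0]; exact hv1.2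
    · show ¬ (v ∘ (Equiv.swap (0:Fin 3) 2)) 1 % 2 = p
      rw [Function.comp_apply, s1]; exact hv1.1
  · intro v hv
    rw [Finset.mem_coe, Finset.mem_filter] at hv ⊢
    obtain ⟨hmem, hjd⟩ := hv
    refine ⟨comp_swap_mem_psph _ hmem, ?_⟩
    have hpat := pattern h4 (mem_psph.1 hmem).1
    rw [← hp] at hpat
    rw [jd_eq_two_iff] at hjd
    have hv2 : v 2 % 2 = p := by
      rcases hpat with ⟨h, _, _⟩ | ⟨_, h, _⟩ | ⟨_, _, h⟩ <;> tauto
    rw [jd_eq_zero_iff]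
    show (v ∘ (Equiv.swap (0:Fin 3) 2)) 0 % 2 = p
    rw [Function.comp_apply, s0]; exact hv2
  · intro v _; funext k; simp [Function.comp_apply, Equiv.swap_apply_self]
  · intro v _; funext k; simp [Function.comp_apply, Equiv.swap_apply_self]

noncomputable def Mset (m m' : ℕ) : Finset ((Fin 3 → ℤ) × (Fin 3 → ℤ)) :=
  ((psph m) ×ˢ (psph m')).filter
    (fun q => (q.1 0 - q.2 0) % 2 = 0 ∧ (q.1 1 - q.2 1) % 2 = 0 ∧ (q.1 2 - q.2 2) % 2 = 0)

lemma three_mul_Mset (m m' : ℕ) (h4 : m % 4 = 1 ∨ m % 4 = 2) (h4' : m' % 4 = m % 4) :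
    3 * (Mset m m').card = (psph m).card * (psph m').card := by
  have hpp : ((m:ℤ)) % 2 = ((m':ℤ)) % 2 := by omega
  have h4'' : m' % 4 = 1 ∨ m' % 4 = 2 := by omega
  have e1 : Mset m m' = ((psph m) ×ˢ (psph m')).filter
      (fun q => jd ((m:ℤ) % 2) q.1 = jd ((m:ℤ) % 2) q.2) := by
    unfold Mset
    apply Finset.filter_congr
    intro q hq
    rw [Finset.mem_product] at hq
    have pu := pattern h4 (mem_psph.1 hq.1).1
    have pv := pattern h4'' (mem_psph.1 hq.2).1
    rw [← hpp] at pv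
    exact match_iff pu pv
  have e2 : (((psph m) ×ˢ (psph m')).filter
      (fun q => jd ((m:ℤ) % 2) q.1 = jd ((m:ℤ) % 2) q.2)).card
      = ∑ i : Fin 3, ((psph m).filter (fun v => jd ((m:ℤ) % 2) v = i)).card *
          ((psph m').filter (fun v => jd ((m:ℤ) % 2) v = i)).card := by
    rw [Finset.card_eq_sum_card_fiberwise
      (f := fun q => jd ((m:ℤ) % 2) q.1) (t := Finset.univ) (fun _ _ => Finset.mem_univ _)]
    apply Finset.sum_congr rfl
    intro i _
    rw [← Finset.card_product]
    congr 1
    ext q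
    simp only [Finset.mem_filter, Finset.mem_product]
    constructor
    · rintro ⟨⟨⟨h1, h2⟩, h3⟩, h5⟩
      exact ⟨⟨h1, h5⟩, h2, by rw [← h3]; exact h5⟩
    · rintro ⟨⟨h1, h5⟩, h2, h6⟩
      exact ⟨⟨⟨h1, h2⟩, by rw [h5, h6]⟩, h5⟩
  have tA : (psph m).card
      = ∑ i : Fin 3, ((psph m).filter (fun v => jd ((m:ℤ) % 2) v = i)).card :=
    Finset.card_eq_sum_card_fiberwise (fun _ _ => Finset.mem_univ _)
  have tB : (psph m').card
      = ∑ i : Fin 3, ((psph m').filter (fun v => jd ((m:ℤ) % 2) v = i)).card :=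
    Finset.card_eq_sum_card_fiberwise (fun _ _ => Finset.mem_univ _)
  have cA1 := class01 (rfl : ((m:ℤ) % 2) = (m:ℤ) % 2) h4
  have cA2 := class02 (rfl : ((m:ℤ) % 2) = (m:ℤ) % 2) h4
  have cB1 := class01 hpp h4''
  have cB2 := class02 hpp h4''
  rw [e1, e2, tA, tB, Fin.sum_univ_three, Fin.sum_univ_three, Fin.sum_univ_three,
    ← cA1, ← cA2, ← cB1, ← cB2]
  ring

lemma prim_equiv {d : ℕ} (h12 : d % 4 = 1 ∨ d % 4 = 2) (w : Fin 6 → ℤ)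
    (u v : Fin 3 → ℤ)
    (hu0 : u 0 = w 0 + w 5) (hu1 : u 1 = w 1 - w 4) (hu2 : u 2 = w 2 + w 3)
    (hv0 : v 0 = w 0 - w 5) (hv1 : v 1 = w 1 + w 4) (hv2 : v 2 = w 2 - w 3)
    (hnu : u 0^2 + u 1^2 + u 2^2 = (d:ℤ)) :
    Finset.univ.gcd w = 1 ↔ Nat.gcd (ct u) (ct v) = 1 := by
  constructor
  · intro hw
    set e := Nat.gcd (ct u) (ct v) with he
    have heu : e ∣ ct u := Nat.gcd_dvd_left _ _
    have hev : e ∣ ct v := Nat.gcd_dvd_right _ _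
    have hodd : Odd e := by
      have hctu := ct_odd h12 hnu
      rcases Nat.even_or_odd e with hpar | hpar
      · exfalso
        have : 2 ∣ ct u := dvd_trans hpar.two_dvd heu
        omega
      · exact hpar
    have hdu : ∀ i, (e:ℤ) ∣ u i := fun i => dvd_trans (Int.natCast_dvd_natCast.2 heu) (ct_dvd u i)
    have hdv : ∀ i, (e:ℤ) ∣ v i := fun i => dvd_trans (Int.natCast_dvd_natCast.2 hev) (ct_dvd v i)
    have hcop : IsCoprime ((e:ℤ)) 2 := by
      rw [Int.isCoprime_iff_gcd_eq_one]
      have : Int.gcd ((e:ℤ)) ((2:ℕ):ℤ) = Nat.gcd e 2 := Int.gcd_natCast_natCast e 2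
      rw [show ((2:ℤ)) = ((2:ℕ):ℤ) by norm_num, this]
      exact hodd.coprime_two_right
    have key : ∀ x y z : ℤ, (e:ℤ) ∣ x → (e:ℤ) ∣ y → x + y = z * 2 → (e:ℤ) ∣ z := by
      intro x y z hx hy hxy
      have hz2 : (e:ℤ) ∣ z * 2 := hxy ▸ dvd_add hx hy
      exact hcop.dvd_of_dvd_mul_right hz2
    have hdw : ∀ i, (e:ℤ) ∣ w i := by
      intro i
      fin_cases i
      · show (e:ℤ) ∣ w 0
        exact key (u 0) (v 0) (w 0) (hdu 0) (hdv 0) (by rw [hu0, hv0]; ring)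
      · show (e:ℤ) ∣ w 1
        exact key (u 1) (v 1) (w 1) (hdu 1) (hdv 1) (by rw [hu1, hv1]; ring)
      · show (e:ℤ) ∣ w 2
        exact key (u 2) (v 2) (w 2) (hdu 2) (hdv 2) (by rw [hu2, hv2]; ring)
      · show (e:ℤ) ∣ w 3
        exact key (u 2) (-(v 2)) (w 3) (hdu 2) (dvd_neg.mpr (hdv 2)) (by rw [hu2, hv2]; ring)
      · show (e:ℤ) ∣ w 4
        exact key (v 1) (-(u 1)) (w 4) (hdv 1) (dvd_neg.mpr (hdu 1)) (by rw [hu1, hv1]; ring)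
      · show (e:ℤ) ∣ w 5
        exact key (u 0) (-(v 0)) (w 5) (hdu 0) (dvd_neg.mpr (hdv 0)) (by rw [hu0, hv0]; ring)
    have h1 : (e:ℤ) ∣ Finset.univ.gcd w := Finset.dvd_gcd (fun i _ => hdw i)
    rw [hw] at h1
    have : e ∣ 1 := by exact_mod_cast h1
    exact Nat.dvd_one.1 this
  · intro he
    have hg : Finset.univ.gcd w ∣ 1 := by
      have hdu : ∀ i, Finset.univ.gcd w ∣ u i := by
        intro i
        fin_cases i
        · show Finset.univ.gcd w ∣ u 0
          rw [hu0]; exact dvd_add (Finset.gcd_dvd (Finset.mem_univ 0)) (Finset.gcd_dvd (Finset.mem_univ 5))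
        · show Finset.univ.gcd w ∣ u 1
          rw [hu1]; exact dvd_sub (Finset.gcd_dvd (Finset.mem_univ 1)) (Finset.gcd_dvd (Finset.mem_univ 4))
        · show Finset.univ.gcd w ∣ u 2
          rw [hu2]; exact dvd_add (Finset.gcd_dvd (Finset.mem_univ 2)) (Finset.gcd_dvd (Finset.mem_univ 3))
      have hdv : ∀ i, Finset.univ.gcd w ∣ v i := by
        intro i
        fin_cases i
        · show Finset.univ.gcd w ∣ v 0
          rw [hv0]; exact dvd_sub (Finset.gcd_dvd (Finset.mem_univ 0)) (Finset.gcd_dvd (Finset.mem_univ 5))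
        · show Finset.univ.gcd w ∣ v 1
          rw [hv1]; exact dvd_add (Finset.gcd_dvd (Finset.mem_univ 1)) (Finset.gcd_dvd (Finset.mem_univ 4))
        · show Finset.univ.gcd w ∣ v 2
          rw [hv2]; exact dvd_sub (Finset.gcd_dvd (Finset.mem_univ 2)) (Finset.gcd_dvd (Finset.mem_univ 3))
      have h1 : Finset.univ.gcd w ∣ (ct u : ℤ) := dvd_ct u _ hdu
      have h2 : Finset.univ.gcd w ∣ (ct v : ℤ) := dvd_ct v _ hdv
      have h3 : Finset.univ.gcd w ∣ ((Nat.gcd (ct u) (ct v) : ℕ) : ℤ) := by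
        rw [← Int.gcd_natCast_natCast]
        exact Int.dvd_coe_gcd h1 h2
      rw [he] at h3
      exact_mod_cast h3
    have hnn := gcd_int_nonneg (Finset.univ) w
    rcases Int.isUnit_iff.1 (isUnit_of_dvd_one hg) with h | h
    · exact h
    · omega

noncomputable def Pset (d : ℕ) : Finset ((Fin 3 → ℤ) × (Fin 3 → ℤ)) :=
  ((sph d) ×ˢ (sph d)).filter (fun q =>
    ((q.1 0 - q.2 0) % 2 = 0 ∧ (q.1 1 - q.2 1) % 2 = 0 ∧ (q.1 2 - q.2 2) % 2 = 0) ∧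
    Nat.gcd (ct q.1) (ct q.2) = 1)

lemma W6_card_eq_Pset (d : ℕ) (h12 : d % 4 = 1 ∨ d % 4 = 2) :
    (W6 d).card = (Pset d).card := by
  apply Finset.card_nbij'
    (fun w => (![w 0 + w 5, w 1 - w 4, w 2 + w 3], ![w 0 - w 5, w 1 + w 4, w 2 - w 3]))
    (fun q => ![(q.1 0 + q.2 0)/2, (q.1 1 + q.2 1)/2, (q.1 2 + q.2 2)/2,
                (q.1 2 - q.2 2)/2, (q.2 1 - q.1 1)/2, (q.1 0 - q.2 0)/2])
  · intro w hw
    obtain ⟨hgcd, hquad, hnorm⟩ := mem_W6.1 hw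
    have hnu : (w 0 + w 5)^2 + (w 1 - w 4)^2 + (w 2 + w 3)^2 = (d:ℤ) := by
      linear_combination hnorm + 2*hquad
    have hnv : (w 0 - w 5)^2 + (w 1 + w 4)^2 + (w 2 - w 3)^2 = (d:ℤ) := by
      linear_combination hnorm - 2*hquad
    unfold Pset
    rw [Finset.mem_coe, Finset.mem_filter, Finset.mem_product]
    refine ⟨⟨mem_sph.2 hnu, mem_sph.2 hnv⟩, ⟨?_, ?_, ?_⟩, ?_⟩
    · show ((w 0 + w 5) - (w 0 - w 5)) % 2 = 0; omega
    · show ((w 1 - w 4) - (w 1 + w 4)) % 2 = 0; omega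
    · show ((w 2 + w 3) - (w 2 - w 3)) % 2 = 0; omega
    · exact (prim_equiv h12 w _ _ rfl rfl rfl rfl rfl rfl hnu).mp hgcd
  · intro q hq
    unfold Pset at hq
    rw [Finset.mem_coe, Finset.mem_filter, Finset.mem_product] at hq
    obtain ⟨⟨hq1, hq2⟩, ⟨hp0, hp1, hp2⟩, hgcd⟩ := hq
    have hnu := mem_sph.1 hq1
    have hnv := mem_sph.1 hq2
    have hnu0 := hnu
    have eu0 : q.1 0 = (q.1 0 + q.2 0)/2 + (q.1 0 - q.2 0)/2 := by omega
    have eu1 : q.1 1 = (q.1 1 + q.2 1)/2 - (q.2 1 - q.1 1)/2 := by omega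
    have eu2 : q.1 2 = (q.1 2 + q.2 2)/2 + (q.1 2 - q.2 2)/2 := by omega
    have ev0 : q.2 0 = (q.1 0 + q.2 0)/2 - (q.1 0 - q.2 0)/2 := by omega
    have ev1 : q.2 1 = (q.1 1 + q.2 1)/2 + (q.2 1 - q.1 1)/2 := by omega
    have ev2 : q.2 2 = (q.1 2 + q.2 2)/2 - (q.1 2 - q.2 2)/2 := by omega
    rw [eu0, eu1, eu2] at hnu
    rw [ev0, ev1, ev2] at hnv
    refine mem_W6.2 ⟨?_, ?_, ?_⟩
    · exact (prim_equiv h12 _ q.1 q.2 eu0 eu1 eu2 ev0 ev1 ev2 hnu0).mpr hgcd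
    · show (q.1 0 + q.2 0)/2 * ((q.1 0 - q.2 0)/2) - (q.1 1 + q.2 1)/2 * ((q.2 1 - q.1 1)/2)
        + (q.1 2 + q.2 2)/2 * ((q.1 2 - q.2 2)/2) = 0
      have h4 : 4 * ((q.1 0 + q.2 0)/2 * ((q.1 0 - q.2 0)/2)
          - (q.1 1 + q.2 1)/2 * ((q.2 1 - q.1 1)/2)
          + (q.1 2 + q.2 2)/2 * ((q.1 2 - q.2 2)/2)) = 0 := by
        linear_combination hnu - hnv
      linarith
    · show ((q.1 0 + q.2 0)/2)^2 + ((q.1 1 + q.2 1)/2)^2 + ((q.1 2 + q.2 2)/2)^2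
        + ((q.1 2 - q.2 2)/2)^2 + ((q.2 1 - q.1 1)/2)^2 + ((q.1 0 - q.2 0)/2)^2 = (d:ℤ)
      have h4 : 2 * (((q.1 0 + q.2 0)/2)^2 + ((q.1 1 + q.2 1)/2)^2 + ((q.1 2 + q.2 2)/2)^2
          + ((q.1 2 - q.2 2)/2)^2 + ((q.2 1 - q.1 1)/2)^2 + ((q.1 0 - q.2 0)/2)^2) = 2*(d:ℤ) := by
        linear_combination hnu + hnv
      linarith
  · intro w _
    funext k
    fin_cases k
    · show ((w 0 + w 5) + (w 0 - w 5))/2 = w 0; omega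
    · show ((w 1 - w 4) + (w 1 + w 4))/2 = w 1; omega
    · show ((w 2 + w 3) + (w 2 - w 3))/2 = w 2; omega
    · show ((w 2 + w 3) - (w 2 - w 3))/2 = w 3; omega
    · show ((w 1 + w 4) - (w 1 - w 4))/2 = w 4; omega
    · show ((w 0 + w 5) - (w 0 - w 5))/2 = w 5; omega
  · intro q hq
    unfold Pset at hq
    rw [Finset.mem_coe, Finset.mem_filter, Finset.mem_product] at hq
    obtain ⟨⟨hq1, hq2⟩, ⟨hp0, hp1, hp2⟩, hgcd⟩ := hq
    refine Prod.ext ?_ ?_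
    · funext k
      fin_cases k
      · show (q.1 0 + q.2 0)/2 + (q.1 0 - q.2 0)/2 = q.1 0; omega
      · show (q.1 1 + q.2 1)/2 - (q.2 1 - q.1 1)/2 = q.1 1; omega
      · show (q.1 2 + q.2 2)/2 + (q.1 2 - q.2 2)/2 = q.1 2; omega
    · funext k
      fin_cases k
      · show (q.1 0 + q.2 0)/2 - (q.1 0 - q.2 0)/2 = q.2 0; omega
      · show (q.1 1 + q.2 1)/2 + (q.2 1 - q.1 1)/2 = q.2 1; omega
      · show (q.1 2 + q.2 2)/2 - (q.1 2 - q.2 2)/2 = q.2 2; omega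

lemma odd_of_dvd_odd {c f : ℕ} (h : c ∣ f) (hf : f % 2 = 1) : c % 2 = 1 := by
  rcases Nat.even_or_odd c with he | ho
  · exfalso
    obtain ⟨k, rfl⟩ := h
    rcases he with ⟨t, rfl⟩
    have hff : (t + t) * k = 2*(t*k) := by ring
    omega
  · exact Nat.odd_iff.mp ho

lemma f_odd {d d₀ f : ℕ} (h12 : d % 4 = 1 ∨ d % 4 = 2) (hfact : d = d₀ * f^2) : f % 2 = 1 := by
  rcases Nat.even_or_odd f with he | ho
  · exfalso
    obtain ⟨k, rfl⟩ := he.two_dvd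
    have : d = 4*(d₀*k^2) := by rw [hfact]; ring
    omega
  · exact Nat.odd_iff.mp ho

lemma Pset_card (d d₀ f : ℕ) (hd : 0 < d) (h12 : d % 4 = 1 ∨ d % 4 = 2)
    (hfact : d = d₀ * f^2) (hsq : Squarefree d₀) :
    (Pset d).card = ∑ cc ∈ ((f.divisors ×ˢ f.divisors).filter fun cc => Nat.gcd cc.1 cc.2 = 1),
      (Mset (d / cc.1^2) (d / cc.2^2)).card := by
  have hd₀ : d₀ ≠ 0 := by rintro rfl; simp at hfact; omega
  have hf : f ≠ 0 := by rintro rfl; simp at hfact; omega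
  have hfodd : f % 2 = 1 := f_odd h12 hfact
  have hct_dvd_f : ∀ v : Fin 3 → ℤ, v 0^2 + v 1^2 + v 2^2 = (d:ℤ) → ct v ∣ f := by
    intro v hv
    exact squarefree_sq_dvd hd₀ hf hsq (hfact ▸ (decomp hd hv).1)
  rw [Finset.card_eq_sum_card_fiberwise
    (f := fun q => (ct q.1, ct q.2))
    (t := (f.divisors ×ˢ f.divisors).filter fun cc => Nat.gcd cc.1 cc.2 = 1) ?hmem]
  case hmem =>
    intro q hq
    unfold Pset at hq
    rw [Finset.mem_coe, Finset.mem_filter, Finset.mem_product] at hq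
    obtain ⟨⟨hq1, hq2⟩, _, hgcd⟩ := hq
    rw [Finset.mem_coe, Finset.mem_filter, Finset.mem_product]
    exact ⟨⟨Nat.mem_divisors.2 ⟨hct_dvd_f _ (mem_sph.1 hq1), hf⟩,
      Nat.mem_divisors.2 ⟨hct_dvd_f _ (mem_sph.1 hq2), hf⟩⟩, hgcd⟩
  apply Finset.sum_congr rfl
  rintro ⟨c, c'⟩ hcc
  rw [Finset.mem_filter, Finset.mem_product] at hcc
  obtain ⟨⟨hcf, hc'f⟩, hccgcd⟩ := hcc
  rw [Nat.mem_divisors] at hcf hc'f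
  have hcodd : c % 2 = 1 := odd_of_dvd_odd hcf.1 hfodd
  have hc'odd : c' % 2 = 1 := odd_of_dvd_odd hc'f.1 hfodd
  have hc2d : c^2 ∣ d := by
    refine dvd_trans (pow_dvd_pow_of_dvd hcf.1 2) ⟨d₀, by rw [hfact]; ring⟩
  have hc'2d : c'^2 ∣ d := by
    refine dvd_trans (pow_dvd_pow_of_dvd hc'f.1 2) ⟨d₀, by rw [hfact]; ring⟩
  have hcne : c ≠ 0 := by rintro rfl; exact hf (Nat.eq_zero_of_zero_dvd hcf.1)
  have hc'ne : c' ≠ 0 := by rintro rfl; exact hf (Nat.eq_zero_of_zero_dvd hc'f.1)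
  have hcast : ((d / c^2 : ℕ) : ℤ) * ((c:ℕ):ℤ)^2 = (d:ℤ) := by
    exact_mod_cast congrArg (Nat.cast (R := ℤ)) (Nat.div_mul_cancel hc2d)
  have hcast' : ((d / c'^2 : ℕ) : ℤ) * ((c':ℕ):ℤ)^2 = (d:ℤ) := by
    exact_mod_cast congrArg (Nat.cast (R := ℤ)) (Nat.div_mul_cancel hc'2d)
  apply Finset.card_nbij'
    (fun q : (Fin 3 → ℤ) × (Fin 3 → ℤ) => ((fun k => q.1 k / (c:ℤ)), (fun k => q.2 k / (c':ℤ))))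
    (fun r : (Fin 3 → ℤ) × (Fin 3 → ℤ) => ((fun k => (c:ℤ) * r.1 k), (fun k => (c':ℤ) * r.2 k)))
  · intro q hq
    rw [Finset.mem_coe, Finset.mem_filter] at hq
    obtain ⟨hqP, hqfib⟩ := hq
    obtain ⟨hctu, hctv⟩ : ct q.1 = c ∧ ct q.2 = c' := Prod.mk.injEq .. ▸ hqfib
    unfold Pset at hqP
    rw [Finset.mem_filter, Finset.mem_product] at hqP
    obtain ⟨⟨hq1, hq2⟩, ⟨hp0, hp1, hp2⟩, _⟩ := hqP
    have hnu := mem_sph.1 hq1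
    have hnv := mem_sph.1 hq2
    obtain ⟨_, u, hu, hun, hug⟩ := decomp hd hnu
    obtain ⟨_, v, hv, hvn, hvg⟩ := decomp hd hnv
    have hfu : (fun k => q.1 k / (c:ℤ)) = u := by
      funext k
      rw [hu k, hctu]
      exact Int.mul_ediv_cancel_left _ (by exact_mod_cast hcne)
    have hfv : (fun k => q.2 k / (c':ℤ)) = v := by
      funext k
      rw [hv k, hctv]
      exact Int.mul_ediv_cancel_left _ (by exact_mod_cast hc'ne)
    unfold Mset
    rw [Finset.mem_coe, Finset.mem_filter, Finset.mem_product]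
    dsimp only
    rw [hfu, hfv]
    rw [hctu] at hu
    rw [hctv] at hv
    have hu2 : ∀ k, u k % 2 = q.1 k % 2 := by
      intro k
      rw [hu k, odd_mul_emod_two _ _ (by omega : (c:ℤ) % 2 = 1)]
    have hv2 : ∀ k, v k % 2 = q.2 k % 2 := by
      intro k
      rw [hv k, odd_mul_emod_two _ _ (by omega : ((c':ℕ):ℤ) % 2 = 1)]
    rw [hctu] at hun
    rw [hctv] at hvn
    refine ⟨⟨mem_psph.2 ⟨hun, hug⟩, mem_psph.2 ⟨hvn, hvg⟩⟩, ?_, ?_, ?_⟩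
    · rw [show q.1 0 / (c:ℤ) = u 0 from congrFun hfu 0,
        show q.2 0 / ((c':ℕ):ℤ) = v 0 from congrFun hfv 0]
      have ha := hu2 0; have hb := hv2 0; omega
    · rw [show q.1 1 / (c:ℤ) = u 1 from congrFun hfu 1,
        show q.2 1 / ((c':ℕ):ℤ) = v 1 from congrFun hfv 1]
      have ha := hu2 1; have hb := hv2 1; omega
    · rw [show q.1 2 / (c:ℤ) = u 2 from congrFun hfu 2,
        show q.2 2 / ((c':ℕ):ℤ) = v 2 from congrFun hfv 2]
      have ha := hu2 2; have hb := hv2 2; omega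
  · intro r hr
    unfold Mset at hr
    rw [Finset.mem_coe, Finset.mem_filter, Finset.mem_product] at hr
    obtain ⟨⟨hr1, hr2⟩, hp0, hp1, hp2⟩ := hr
    obtain ⟨hnr1, hgr1⟩ := mem_psph.1 hr1
    obtain ⟨hnr2, hgr2⟩ := mem_psph.1 hr2
    have hctr1 : ct r.1 = 1 := by unfold ct; rw [hgr1]; rfl
    have hctr2 : ct r.2 = 1 := by unfold ct; rw [hgr2]; rfl
    rw [Finset.mem_coe, Finset.mem_filter]
    dsimp only
    constructor
    · unfold Pset
      rw [Finset.mem_filter, Finset.mem_product]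
      dsimp only
      refine ⟨⟨mem_sph.2 ?_, mem_sph.2 ?_⟩, ⟨?_, ?_, ?_⟩, ?_⟩
      · linear_combination ((c:ℕ):ℤ)^2 * hnr1 + hcast
      · linear_combination ((c':ℕ):ℤ)^2 * hnr2 + hcast'
      · have e1 := odd_mul_emod_two ((c:ℕ):ℤ) (r.1 0) (by omega)
        have e2 := odd_mul_emod_two ((c':ℕ):ℤ) (r.2 0) (by omega)
        omega
      · have e1 := odd_mul_emod_two ((c:ℕ):ℤ) (r.1 1) (by omega)
        have e2 := odd_mul_emod_two ((c':ℕ):ℤ) (r.2 1) (by omega)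
        omega
      · have e1 := odd_mul_emod_two ((c:ℕ):ℤ) (r.1 2) (by omega)
        have e2 := odd_mul_emod_two ((c':ℕ):ℤ) (r.2 2) (by omega)
        omega
      · rw [ct_smul, ct_smul, hctr1, hctr2, mul_one, mul_one]
        exact hccgcd
    · rw [ct_smul, ct_smul, hctr1, hctr2, mul_one, mul_one]
  · intro q hq
    rw [Finset.mem_coe, Finset.mem_filter] at hq
    obtain ⟨hqP, hqfib⟩ := hq
    obtain ⟨hctu, hctv⟩ : ct q.1 = c ∧ ct q.2 = c' := Prod.mk.injEq .. ▸ hqfib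
    dsimp only
    refine Prod.ext ?_ ?_
    · funext k
      show (c:ℤ) * (q.1 k / (c:ℤ)) = q.1 k
      exact Int.mul_ediv_cancel' (hctu ▸ ct_dvd q.1 k)
    · funext k
      show ((c':ℕ):ℤ) * (q.2 k / ((c':ℕ):ℤ)) = q.2 k
      exact Int.mul_ediv_cancel' (hctv ▸ ct_dvd q.2 k)
  · intro r hr
    dsimp only
    refine Prod.ext ?_ ?_
    · funext k
      show ((c:ℕ):ℤ) * r.1 k / ((c:ℕ):ℤ) = r.1 k
      exact Int.mul_ediv_cancel_left _ (by exact_mod_cast hcne)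
    · funext k
      show ((c':ℕ):ℤ) * r.2 k / ((c':ℕ):ℤ) = r.2 k
      exact Int.mul_ediv_cancel_left _ (by exact_mod_cast hc'ne)

lemma nat_key (d d₀ f : ℕ) (hd : 0 < d) (h12 : d % 4 = 1 ∨ d % 4 = 2)
    (hfact : d = d₀ * f ^ 2) (hsq : Squarefree d₀) :
    3 * (W6 d).card = ∑ c ∈ f.divisors, ∑ c' ∈ f.divisors.filter (fun c' => Nat.gcd c c' = 1),
      r3prim (d / c ^ 2) * r3prim (d / c' ^ 2) := by
  have hf : f ≠ 0 := by rintro rfl; simp at hfact; omega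
  have hfodd : f % 2 = 1 := f_odd h12 hfact
  rw [W6_card_eq_Pset d h12, Pset_card d d₀ f hd h12 hfact hsq, Finset.mul_sum]
  have step : ∀ cc ∈ ((f.divisors ×ˢ f.divisors).filter fun cc => Nat.gcd cc.1 cc.2 = 1),
      3 * (Mset (d / cc.1^2) (d / cc.2^2)).card
        = r3prim (d / cc.1 ^ 2) * r3prim (d / cc.2 ^ 2) := by
    rintro ⟨c, c'⟩ hcc
    rw [Finset.mem_filter, Finset.mem_product] at hcc
    obtain ⟨⟨hcf, hc'f⟩, hccgcd⟩ := hcc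
    rw [Nat.mem_divisors] at hcf hc'f
    have hcodd : c % 2 = 1 := odd_of_dvd_odd hcf.1 hfodd
    have hc'odd : c' % 2 = 1 := odd_of_dvd_odd hc'f.1 hfodd
    have hc2d : c^2 ∣ d := dvd_trans (pow_dvd_pow_of_dvd hcf.1 2) ⟨d₀, by rw [hfact]; ring⟩
    have hc'2d : c'^2 ∣ d := dvd_trans (pow_dvd_pow_of_dvd hc'f.1 2) ⟨d₀, by rw [hfact]; ring⟩
    have e1 : d % 4 = (d / c^2) % 4 := div_sq_mod_four hcodd (Nat.div_mul_cancel hc2d).symm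
    have e2 : d % 4 = (d / c'^2) % 4 := div_sq_mod_four hc'odd (Nat.div_mul_cancel hc'2d).symm
    have h4 : (d / c^2) % 4 = 1 ∨ (d / c^2) % 4 = 2 := by omega
    have h4' : (d / c'^2) % 4 = (d / c^2) % 4 := by omega
    rw [three_mul_Mset _ _ h4 h4', r3prim_eq_card, r3prim_eq_card]
  rw [Finset.sum_congr rfl step, Finset.sum_filter, Finset.sum_product]
  apply Finset.sum_congr rfl
  intro c _
  rw [← Finset.sum_filter]

/-- for `d ≡ 1, 2 (mod 4)`, `d = d₀f²` with `d₀` squarefree,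
`r₂₄(d) = (1/6)·Σ_{c ∣ f} Σ_{c′ ∣ f, gcd(c,c′)=1} r₃,prim(d/c²)·r₃,prim(d/c′²)`. -/
theorem r24_eq_of_one_two_mod_four (d d₀ f : ℕ) (hd : 0 < d)
    (h12 : d % 4 = 1 ∨ d % 4 = 2) (hfact : d = d₀ * f ^ 2) (hsq : Squarefree d₀) :
    r24 d = (1 / 6 : ℚ) *
      ∑ c ∈ f.divisors, ∑ c' ∈ f.divisors.filter (fun c' => Nat.gcd c c' = 1),
        (r3prim (d / c ^ 2) : ℚ) * (r3prim (d / c' ^ 2) : ℚ) := by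
  have key := nat_key d d₀ f hd h12 hfact hsq
  have hcast : ((3 * (W6 d).card : ℕ) : ℚ)
      = ∑ c ∈ f.divisors, ∑ c' ∈ f.divisors.filter (fun c' => Nat.gcd c c' = 1),
        (r3prim (d / c ^ 2) : ℚ) * (r3prim (d / c' ^ 2) : ℚ) := by
    rw [key]
    push_cast
    rfl
  rw [r24_eq_card]
  push_cast at hcast
  linarith [hcast]
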